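/- Every point z of P(n) with z_{n−1} = z_n can be written as ∑_{1≤i<j≤n} a_{ij}e_i + (1−a_{ij})e_j with 0 ≤ a_{ij} ≤ 1, a_{i(n−1)} = a_{in} for all i ≤ n−2, and a_{(n−1)n} = 1/2. -/
import Mathlib


/-- The standard basis vector `eᵢ` of `ℝⁿ`. -/
def stdVec {n : ℕ} (i : Fin n) : Fin n → ℝ := fun j => if j = i then 1 else 0

/-- The standard permutohedron `P(n) ⊂ ℝⁿ` as a zonotope:
`P(n) = {∑_{i<j} a_{ij}eᵢ + (1−a_{ij})eⱼ : 0 ≤ a_{ij} ≤ 1}`. -/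
def permutohedron (n : ℕ) : Set (Fin n → ℝ) :=
  {x | ∃ a : Fin n → Fin n → ℝ, (∀ i j : Fin n, 0 ≤ a i j ∧ a i j ≤ 1) ∧
    x = ∑ i : Fin n, ∑ j : Fin n,
      if i < j then a i j • stdVec i + (1 - a i j) • stdVec j else 0}

lemma coordSum {n : ℕ} (a : Fin n → Fin n → ℝ) (k : Fin n) :
    (∑ i : Fin n, ∑ j : Fin n,
      if i < j then a i j • stdVec i + (1 - a i j) • stdVec j else 0) k
    = (∑ j : Fin n, if k < j then a k j else 0)
      + ∑ i : Fin n, if i < k then 1 - a i k else 0 := by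
  simp only [Finset.sum_apply, ite_apply, Pi.add_apply, Pi.smul_apply, Pi.zero_apply,
    stdVec, smul_eq_mul, mul_ite, mul_one, mul_zero]
  have key : ∀ i j : Fin n,
      (if i < j then (if k = i then a i j else 0) + (if k = j then 1 - a i j else 0) else 0)
      = (if i = k then (if i < j then a i j else 0) else 0)
        + (if j = k then (if i < j then 1 - a i j else 0) else 0) := by
    intro i j
    by_cases h1 : i = k <;> by_cases h2 : j = k <;> by_cases h3 : i < j <;>
      simp_all [eq_comm, lt_irrefl]
  calc (∑ i : Fin n, ∑ j : Fin n,
        if i < j then (if k = i then a i j else 0) + (if k = j then 1 - a i j else 0) else 0)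
      = ∑ i : Fin n, ∑ j : Fin n, ((if i = k then (if i < j then a i j else 0) else 0)
        + (if j = k then (if i < j then 1 - a i j else 0) else 0)) := by
        exact Finset.sum_congr rfl fun i _ => Finset.sum_congr rfl fun j _ => key i j
    _ = (∑ i : Fin n, ∑ j : Fin n, (if i = k then (if i < j then a i j else 0) else 0))
        + ∑ i : Fin n, ∑ j : Fin n, (if j = k then (if i < j then 1 - a i j else 0) else 0) := by
        simp [Finset.sum_add_distrib]
    _ = (∑ j : Fin n, if k < j then a k j else 0)
        + ∑ i : Fin n, if i < k then 1 - a i k else 0 := by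
        congr 1
        · rw [Finset.sum_comm]
          refine Finset.sum_congr rfl fun j _ => ?_
          rw [Finset.sum_ite_eq' Finset.univ k]
          simp
        · refine Finset.sum_congr rfl fun i _ => ?_
          rw [Finset.sum_ite_eq' Finset.univ k]
          simp

/-- every point `z ∈ P(n)` with `z_{n−1} = z_n` can be expressed with
coefficients satisfying `a_{i(n−1)} = a_{in}` for `i ≤ n−2` and `a_{(n−1)n} = 1/2`.
(0-based indices: the last two coordinates are `⟨n−2⟩` and `⟨n−1⟩`.) -/
theorem permutohedron_hyperplane_symmetric_coefficients (n : ℕ) (hn : 2 ≤ n)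
    (z : Fin n → ℝ) (hz : z ∈ permutohedron n)
    (heq : z ⟨n - 2, by omega⟩ = z ⟨n - 1, by omega⟩) :
    ∃ a : Fin n → Fin n → ℝ,
      (∀ i j : Fin n, 0 ≤ a i j ∧ a i j ≤ 1) ∧
      (∀ i : Fin n, (i : ℕ) < n - 2 → a i ⟨n - 2, by omega⟩ = a i ⟨n - 1, by omega⟩) ∧
      a ⟨n - 2, by omega⟩ ⟨n - 1, by omega⟩ = 1 / 2 ∧
      z = ∑ i : Fin n, ∑ j : Fin n,
        if i < j then a i j • stdVec i + (1 - a i j) • stdVec j else 0 := by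
  obtain ⟨a, ha, hsum⟩ := hz
  set p : Fin n := ⟨n - 2, by omega⟩ with hp
  set q : Fin n := ⟨n - 1, by omega⟩ with hq
  have hpq : p < q := by rw [hp, hq, Fin.mk_lt_mk]; omega
  have hpq' : p ≠ q := ne_of_lt hpq
  -- collapse lemmas
  have sum_pj : ∀ f : Fin n → ℝ, (∑ j : Fin n, if p < j then f j else 0) = f q := by
    intro f
    have h : ∀ j : Fin n, (if p < j then f j else 0) = (if j = q then f j else 0) := by
      intro j
      by_cases hj : j = q
      · subst hj; rw [if_pos hpq, if_pos rfl]
      · have hjv : (j : ℕ) ≠ n - 1 := by simpa [hq, Fin.ext_iff] using hj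
        have hjn := j.isLt
        rw [if_neg hj, if_neg]
        rw [hp, Fin.lt_def]
        simp only [Fin.val_mk]
        omega
    rw [Finset.sum_congr rfl fun j _ => h j, Finset.sum_ite_eq' Finset.univ q]
    simp
  have hlt_q : ∀ j : Fin n, ¬ q < j := by
    intro j
    have := j.isLt
    rw [hq, Fin.lt_def]
    simp only [Fin.val_mk]
    omega
  have sum_qj : ∀ f : Fin n → ℝ, (∑ j : Fin n, if q < j then f j else 0) = 0 :=
    fun f => Finset.sum_eq_zero fun j _ => if_neg (hlt_q j)
  have sum_iq : ∀ f : Fin n → ℝ,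
      (∑ i : Fin n, if i < q then f i else 0) = f p + ∑ i : Fin n, if i < p then f i else 0 := by
    intro f
    have h : ∀ i : Fin n, (if i < q then f i else 0)
        = (if i = p then f i else 0) + (if i < p then f i else 0) := by
      intro i
      have hin := i.isLt
      by_cases h1 : i = p
      · subst h1; rw [if_pos hpq, if_pos rfl, if_neg (lt_irrefl _), add_zero]
      · have hiv : (i : ℕ) ≠ n - 2 := by simpa [hp, Fin.ext_iff] using h1
        rw [if_neg h1, zero_add]
        have : (i < q) ↔ (i < p) := by
          rw [hp, hq, Fin.lt_def, Fin.lt_def]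
          simp only [Fin.val_mk]
          omega
        rw [if_congr this rfl rfl]
    rw [Finset.sum_congr rfl fun i _ => h i, Finset.sum_add_distrib,
      Finset.sum_ite_eq' Finset.univ p]
    simp
  have split1 : ∀ g : Fin n → ℝ, (∑ i : Fin n, if i < p then 1 - g i else 0)
      = (∑ i : Fin n, if i < p then (1:ℝ) else 0) - ∑ i : Fin n, if i < p then g i else 0 := by
    intro g
    rw [← Finset.sum_sub_distrib]
    refine Finset.sum_congr rfl fun i _ => ?_
    split <;> simp
  have split2 : (∑ i : Fin n, if i < p then 1 - (a i p + a i q) / 2 else 0)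
      = (∑ i : Fin n, if i < p then (1:ℝ) else 0)
        - ((∑ i : Fin n, if i < p then a i p else 0)
          + (∑ i : Fin n, if i < p then a i q else 0)) / 2 := by
    rw [← Finset.sum_add_distrib, Finset.sum_div, ← Finset.sum_sub_distrib]
    refine Finset.sum_congr rfl fun i _ => ?_
    split <;> norm_num
  -- process heq
  subst hsum
  rw [coordSum, coordSum, sum_pj, sum_qj, sum_iq, split1 (fun i => a i p),
    split1 (fun i => a i q)] at heq
  set A : ℝ := ∑ i : Fin n, if i < p then a i p else 0 with hA
  set B : ℝ := ∑ i : Fin n, if i < p then a i q else 0 with hB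
  set C : ℝ := ∑ i : Fin n, if i < p then (1:ℝ) else 0 with hC
  have key : B - A = 1 - 2 * a p q := by linarith
  refine ⟨fun i j => if i = p ∧ j = q then (1:ℝ)/2
    else if j = p ∨ j = q then (a i p + a i q) / 2 else a i j, ?_, ?_, ?_, ?_⟩
  · intro i j
    have h1 := ha i p
    have h2 := ha i q
    have h3 := ha i j
    dsimp only
    split_ifs <;> constructor <;> linarith
  · intro i hi
    have hip : i ≠ p := by
      intro h
      rw [h, hp] at hi
      simp only [Fin.val_mk] at hi
      omega
    dsimp only
    rw [if_neg (fun h => hpq' h.2), if_pos (Or.inl rfl),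
      if_neg (fun h => hip h.1), if_pos (Or.inr rfl)]
  · dsimp only
    rw [if_pos ⟨rfl, rfl⟩]
  · funext k
    rw [coordSum, coordSum]
    by_cases hkp : k = p
    · subst hkp
      rw [sum_pj, sum_pj, split1 (fun i => a i p)]
      rw [if_pos (show p = p ∧ q = q from ⟨rfl, rfl⟩)]
      have hbp : ∀ i : Fin n, (if i < p then 1 -
          (if i = p ∧ p = q then (1:ℝ)/2
            else if p = p ∨ p = q then (a i p + a i q) / 2 else a i p) else 0)
          = (if i < p then 1 - (a i p + a i q) / 2 else 0) := by
        intro i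
        rw [if_neg (show ¬(i = p ∧ p = q) from fun h => hpq' h.2),
          if_pos (show p = p ∨ p = q from Or.inl rfl)]
      rw [Finset.sum_congr rfl fun i _ => hbp i, split2]
      linarith
    · by_cases hkq : k = q
      · subst hkq
        rw [sum_qj, sum_qj, sum_iq (fun i => 1 - a i q), sum_iq]
        rw [if_pos (show p = p ∧ q = q from ⟨rfl, rfl⟩)]
        have hbq : ∀ i : Fin n, (if i < p then 1 -
            (if i = p ∧ q = q then (1:ℝ)/2
              else if q = p ∨ q = q then (a i p + a i q) / 2 else a i q) else 0)
            = (if i < p then 1 - (a i p + a i q) / 2 else 0) := by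
          intro i
          by_cases h : i < p
          · rw [if_neg (show ¬(i = p ∧ q = q) from fun hh => (ne_of_lt h) hh.1),
              if_pos (show q = p ∨ q = q from Or.inr rfl)]
          · rw [if_neg h, if_neg h]
        rw [Finset.sum_congr rfl fun i _ => hbq i, split2, split1 (fun i => a i q)]
        linarith
      · -- generic k
        have h1 : (k : ℕ) ≠ n - 2 := by simpa [hp, Fin.ext_iff] using hkp
        have h2 : (k : ℕ) ≠ n - 1 := by simpa [hq, Fin.ext_iff] using hkq
        have hkn := k.isLt
        have hkp' : k < p := by
          rw [hp, Fin.lt_def]; simp only [Fin.val_mk]; omega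
        have hkq' : k < q := lt_trans hkp' hpq
        have hsec : ∀ i : Fin n, (if i < k then 1 -
            (if i = p ∧ k = q then (1:ℝ)/2
              else if k = p ∨ k = q then (a i p + a i q) / 2 else a i k) else 0)
            = (if i < k then 1 - a i k else 0) := by
          intro i
          rw [if_neg (show ¬(i = p ∧ k = q) from fun h => hkq h.2),
            if_neg (show ¬(k = p ∨ k = q) from fun h => h.elim hkp hkq)]
        have hterm : ∀ j : Fin n, (if k < j then
            (if k = p ∧ j = q then (1:ℝ)/2
              else if j = p ∨ j = q then (a k p + a k q) / 2 else a k j) else 0)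
            = (if k < j then a k j else 0)
              + ((if j = p then (a k q - a k p) / 2 else 0)
                + (if j = q then (a k p - a k q) / 2 else 0)) := by
          intro j
          by_cases hj1 : j = p
          · subst hj1
            rw [if_pos hkp', if_pos hkp',
              if_neg (show ¬(k = p ∧ p = q) from fun h => hpq' h.2),
              if_pos (show p = p ∨ p = q from Or.inl rfl), if_pos rfl,
              if_neg (show ¬(p = q) from hpq')]
            ring
          · by_cases hj2 : j = q
            · subst hj2
              rw [if_pos hkq', if_pos hkq',
                if_neg (show ¬(k = p ∧ q = q) from fun h => hkp h.1),
                if_pos (show q = p ∨ q = q from Or.inr rfl),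
                if_neg (show ¬(q = p) from Ne.symm hpq'), if_pos rfl]
              ring
            · rw [if_neg (show ¬(k = p ∧ j = q) from fun h => hj2 h.2),
                if_neg (show ¬(j = p ∨ j = q) from fun h => h.elim hj1 hj2),
                if_neg hj1, if_neg hj2, add_zero, add_zero]
        rw [Finset.sum_congr rfl fun i _ => hsec i,
          Finset.sum_congr rfl fun j _ => hterm j, Finset.sum_add_distrib,
          Finset.sum_add_distrib, Finset.sum_ite_eq' Finset.univ p,
          Finset.sum_ite_eq' Finset.univ q]
        simp only [Finset.mem_univ, if_pos]
        ring
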